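/- arXiv:2007.04804 — 2 statements merged into one kernel-verified Lean document; each statement's English description precedes it below -/
import Mathlib

section
/- Let T₁, T₂ ∈ B_A(H), set P = T₁^{#_A}T₁ + T₂T₂^{#_A}, and define m_A(T₂T₁) = inf over θ ∈ ℝ and x ∈ H with ‖x‖_A = 1 of ‖Re_A(e^{iθ}T₂T₁)x‖_A, where Re_A(S) = (S + S^{#_A})/2. Then w_𝔸([[O, T₁],[T₂, O]])⁴ ≥ (1/16)‖P‖_A² + (1/8)c_A(P T₂T₁ + T₂T₁ P) + (1/4)m_A(T₂T₁)². -/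
noncomputable section

open ContinuousLinearMap

/-- The semi-inner product induced by a positive operator `A`: `⟪x, y⟫_A = ⟪A x, y⟫`. -/
def sInnerA {E : Type*} [NormedAddCommGroup E] [InnerProductSpace ℂ E]
    (A : E →L[ℂ] E) (x y : E) : ℂ :=
  inner ℂ (A x) y

/-- The seminorm induced by `A`: `‖x‖_A = √(re ⟪A x, x⟫)`. -/
def sNormA {E : Type*} [NormedAddCommGroup E] [InnerProductSpace ℂ E]
    (A : E →L[ℂ] E) (x : E) : ℝ :=
  Real.sqrt (sInnerA A x x).re

/-- The `A`-operator seminorm: `sup {‖T x‖_A : x ∈ closure (range A), ‖x‖_A = 1}`. -/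
def opNormA {E : Type*} [NormedAddCommGroup E] [InnerProductSpace ℂ E]
    (A T : E →L[ℂ] E) : ℝ :=
  sSup {r | ∃ x ∈ closure (Set.range A), sNormA A x = 1 ∧ r = sNormA A (T x)}

/-- The `A`-numerical radius: `sup {|⟪T x, x⟫_A| : ‖x‖_A = 1}`. -/
def wA {E : Type*} [NormedAddCommGroup E] [InnerProductSpace ℂ E]
    (A T : E →L[ℂ] E) : ℝ :=
  sSup {r | ∃ x, sNormA A x = 1 ∧ r = ‖sInnerA A (T x) x‖}

/-- The `A`-Crawford number: `inf {|⟪T x, x⟫_A| : ‖x‖_A = 1}`. -/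
def cA {E : Type*} [NormedAddCommGroup E] [InnerProductSpace ℂ E]
    (A T : E →L[ℂ] E) : ℝ :=
  sInf {r | ∃ x, sNormA A x = 1 ∧ r = ‖sInnerA A (T x) x‖}

/-- `T ∈ B_A(H)`, i.e. the range of `T* A` is contained in the range of `A`. -/
def memBA {E : Type*} [NormedAddCommGroup E] [InnerProductSpace ℂ E] [CompleteSpace E]
    (A T : E →L[ℂ] E) : Prop :=
  Set.range ((adjoint T) ∘L A) ⊆ Set.range A

/-- `S` is the distinguished `A`-adjoint `T^{#_A}` of `T`:
`A ∘ S = T* ∘ A` and `R(S) ⊆ closure (R(A))`. -/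
def IsSharpA {E : Type*} [NormedAddCommGroup E] [InnerProductSpace ℂ E] [CompleteSpace E]
    (A T S : E →L[ℂ] E) : Prop :=
  A ∘L S = (adjoint T) ∘L A ∧ Set.range S ⊆ closure (Set.range A)

/-- The `2 × 2` operator matrix `[[X, Y], [Z, W]]` acting blockwise on
the Hilbert space direct sum `H ⊕ H`. -/
def blk2 {H : Type*} [NormedAddCommGroup H] [InnerProductSpace ℂ H]
    (X Y Z W : H →L[ℂ] H) : WithLp 2 (H × H) →L[ℂ] WithLp 2 (H × H) :=
  ((WithLp.prodContinuousLinearEquiv 2 ℂ H H).symm : (H × H) →L[ℂ] WithLp 2 (H × H)) ∘L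
    ((X ∘L ContinuousLinearMap.fst ℂ H H + Y ∘L ContinuousLinearMap.snd ℂ H H).prod
      (Z ∘L ContinuousLinearMap.fst ℂ H H + W ∘L ContinuousLinearMap.snd ℂ H H)) ∘L
    ((WithLp.prodContinuousLinearEquiv 2 ℂ H H) : WithLp 2 (H × H) →L[ℂ] H × H)

/-!
Write `𝕋 = [[O, T₁], [T₂, O]]`, `w = w_𝔸(𝕋)`, `P = T₁^#T₁ + T₂T₂^#`, `S = T₂T₁`, and for a
unimodular `e` let `R = Re_𝔸(e𝕋)`. `R` is `𝔸`-selfadjoint with `𝔸`-numerical radius at most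
`w`, so by polarization `‖R v‖_𝔸 ≤ w ‖v‖_𝔸`, hence `‖R² v‖_𝔸 ≤ w²` for `‖v‖_𝔸 = 1`. For
`v = (0, u)` the second component of `R² v` is `¼ P u + ½ Re_A(e² S) u` modulo `ker A` (because
`A T₁^#T₂^# = A S^#`), so expanding the square gives
`w⁴ ≥ ‖P u‖²_A / 16 + Re (e² conj ⟪(PS + SP) u, u⟫_A) / 8 + ‖Re_A(e² S) u‖²_A / 4`.
Choosing `e² = exp (i arg ⟪(PS + SP) u, u⟫_A)` makes the middle term a modulus; taking the
infimum and the supremum over `u` gives the theorem.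

`w` is finite because an operator with an `A`-adjoint is `A`-bounded: for an `A`-selfadjoint `Q`
and `‖z‖_A = 1`, Cauchy–Schwarz gives `‖Q z‖_A ^ (2 ^ (k + 1)) ≤ ‖Q ^ (2 ^ k) z‖_A²`, which grows
at most like `‖Q‖ ^ (2 ^ (k + 1))`.
-/

open scoped InnerProductSpace ComplexConjugate

lemma le_of_forall_pow_two_pow_le_mul {a b C : ℝ} (hb : 0 ≤ b)
    (h : ∀ k : ℕ, a ^ 2 ^ k ≤ C * b ^ 2 ^ k) : a ≤ b := by
  rcases hb.eq_or_lt with rfl | hb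
  · simpa using h 0
  by_contra! hba
  have hr : 1 < a / b := (one_lt_div hb).2 hba
  obtain ⟨n, hn⟩ := pow_unbounded_of_one_lt C hr
  have hC : (a / b) ^ 2 ^ n ≤ C := by
    rw [div_pow, div_le_iff₀ (by positivity)]
    exact h n
  exact (hn.trans_le ((pow_le_pow_right₀ hr.le Nat.lt_two_pow_self.le).trans hC)).false

lemma exp_arg_mul_I_mul_conj (c : ℂ) : Complex.exp (c.arg * Complex.I) * conj c = ‖c‖ := by
  have h := congrArg conj (Complex.norm_mul_exp_arg_mul_I c)
  rw [map_mul, Complex.conj_ofReal, ← Complex.exp_conj, map_mul, Complex.conj_ofReal,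
    Complex.conj_I] at h
  rw [← h, mul_left_comm, ← Complex.exp_add, mul_neg, add_neg_cancel, Complex.exp_zero, mul_one]

section SemiInner

variable {E : Type*} [NormedAddCommGroup E] [InnerProductSpace ℂ E] {A T S R : E →L[ℂ] E}

/-- The `A`-adjoint relation `⟪T v, w⟫_A = ⟪v, S w⟫_A`; unlike `IsSharpA` it does not single out
one adjoint. -/
def IsAdjointA (A T S : E →L[ℂ] E) : Prop :=
  ∀ v w, ⟪A (T v), w⟫_ℂ = ⟪A v, S w⟫_ℂ

/-- The `A`-real part `Re_A(T) = (T + T^{#_A}) / 2`, given an `A`-adjoint `S` of `T`. -/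
def reA (T S : E →L[ℂ] E) : E →L[ℂ] E :=
  (2 : ℂ)⁻¹ • (T + S)

/-- The quantity `m_A(S)` of the paper, given an `A`-adjoint `Ss` of `S`. -/
def mA (A S Ss : E →L[ℂ] E) : ℝ :=
  sInf {r | ∃ θ : ℝ, ∃ x : E, sNormA A x = 1 ∧
    r = sNormA A
      (reA (Complex.exp (θ * Complex.I) • S) (conj (Complex.exp (θ * Complex.I)) • Ss) x)}

lemma sNormA_eq_one_iff (x : E) : sNormA A x = 1 ↔ A.reApplyInnerSelf x = 1 :=
  Real.sqrt_eq_one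

lemma ContinuousLinearMap.IsPositive.sNormA_sq (hA : A.IsPositive) (x : E) :
    sNormA A x ^ 2 = A.reApplyInnerSelf x :=
  Real.sq_sqrt (hA.2 x)

lemma ContinuousLinearMap.IsPositive.conj_inner_apply (hA : A.IsPositive) (x y : E) :
    conj ⟪A x, y⟫_ℂ = ⟪A y, x⟫_ℂ := by
  rw [inner_conj_symm, hA.inner_left_eq_inner_right]

lemma ContinuousLinearMap.IsPositive.norm_inner_apply_sq_le (hA : A.IsPositive) (x y : E) :
    ‖⟪A x, y⟫_ℂ‖ ^ 2 ≤ A.reApplyInnerSelf x * A.reApplyInnerSelf y := by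
  let core : PreInnerProductSpace.Core ℂ E :=
    { inner := fun u v => ⟪A u, v⟫_ℂ
      conj_inner_symm := fun u v => hA.conj_inner_apply v u
      re_inner_nonneg := hA.2
      add_left := fun u v w => by simp
      smul_left := fun u v r => by simp [mul_comm] }
  have h : ‖⟪A x, y⟫_ℂ‖ * ‖⟪A y, x⟫_ℂ‖ ≤ A.reApplyInnerSelf x * A.reApplyInnerSelf y :=
    @InnerProductSpace.Core.inner_mul_inner_self_le ℂ E _ _ _ core x y
  rwa [← hA.conj_inner_apply x y, RCLike.norm_conj, ← sq] at h

lemma ContinuousLinearMap.IsPositive.reApplyInnerSelf_add (hA : A.IsPositive) (x y : E) :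
    A.reApplyInnerSelf (x + y) =
      A.reApplyInnerSelf x + 2 * (⟪A x, y⟫_ℂ).re + A.reApplyInnerSelf y := by
  have : (⟪A y, x⟫_ℂ).re = (⟪A x, y⟫_ℂ).re := by rw [← hA.conj_inner_apply, Complex.conj_re]
  simp only [reApplyInnerSelf_apply, map_add, inner_add_left, inner_add_right,
    RCLike.re_to_complex, this]
  ring

lemma ContinuousLinearMap.IsPositive.reApplyInnerSelf_eq_of_apply_eq (hA : A.IsPositive)
    {x y : E} (h : A x = A y) : A.reApplyInnerSelf x = A.reApplyInnerSelf y := by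
  rw [reApplyInnerSelf_apply, reApplyInnerSelf_apply, hA.inner_left_eq_inner_right, h,
    ← hA.inner_left_eq_inner_right, h]

lemma reApplyInnerSelf_le_norm_mul_sq (A : E →L[ℂ] E) (x : E) :
    A.reApplyInnerSelf x ≤ ‖A‖ * ‖x‖ ^ 2 :=
  calc A.reApplyInnerSelf x ≤ ‖⟪A x, x⟫_ℂ‖ := RCLike.re_le_norm _
    _ ≤ ‖A x‖ * ‖x‖ := norm_inner_le_norm _ _
    _ ≤ ‖A‖ * ‖x‖ * ‖x‖ := by gcongr; exact A.le_opNorm x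
    _ = ‖A‖ * ‖x‖ ^ 2 := by ring

lemma reApplyInnerSelf_add_add_sub (A : E →L[ℂ] E) (x y : E) :
    A.reApplyInnerSelf (x + y) + A.reApplyInnerSelf (x - y) =
      2 * A.reApplyInnerSelf x + 2 * A.reApplyInnerSelf y := by
  simp only [reApplyInnerSelf_apply, map_add, map_sub, inner_add_left, inner_add_right,
    inner_sub_left, inner_sub_right]
  ring

lemma exists_reApplyInnerSelf_smul_eq_one {x : E} (hx : 0 < A.reApplyInnerSelf x) :
    ∃ c : ℂ, A.reApplyInnerSelf (c • x) = 1 := by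
  refine ⟨(√(A.reApplyInnerSelf x))⁻¹, ?_⟩
  rw [reApplyInnerSelf_smul, norm_inv, Complex.norm_real, Real.norm_eq_abs,
    abs_of_nonneg (Real.sqrt_nonneg _), inv_pow, Real.sq_sqrt hx.le, inv_mul_cancel₀ hx.ne']

namespace IsAdjointA

variable {T' S' : E →L[ℂ] E}

lemma of_isSharpA [CompleteSpace E] (hA : A.IsPositive) (h : IsSharpA A T S) :
    IsAdjointA A T S := by
  intro v w
  have hw : A (S w) = adjoint T (A w) := congr($(h.1) w)
  rw [hA.inner_left_eq_inner_right, ← adjoint_inner_right, ← hw, hA.inner_left_eq_inner_right]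

lemma symm (hA : A.IsPositive) (h : IsAdjointA A T S) : IsAdjointA A S T := by
  intro v w
  rw [← hA.conj_inner_apply w, ← h, hA.conj_inner_apply]

lemma comp (h : IsAdjointA A T S) (h' : IsAdjointA A T' S') :
    IsAdjointA A (T ∘L T') (S' ∘L S) := by
  intro v w
  rw [comp_apply, h, h', comp_apply]

lemma add (h : IsAdjointA A T S) (h' : IsAdjointA A T' S') : IsAdjointA A (T + T') (S + S') := by
  intro v w
  rw [add_apply, add_apply, map_add, inner_add_left, inner_add_right, h, h']

lemma smul (h : IsAdjointA A T S) (c : ℂ) : IsAdjointA A (c • T) (conj c • S) := by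
  intro v w
  rw [smul_apply, smul_apply, map_smul, inner_smul_left, inner_smul_right, h]

lemma pow (h : IsAdjointA A S S) (n : ℕ) : IsAdjointA A (S ^ n) (S ^ n) := by
  induction n with
  | zero => intro v w; rfl
  | succ n ih =>
    have := ih.comp h
    rwa [← mul_def, ← mul_def, ← pow_succ, ← pow_succ'] at this

lemma selfAdjoint_reA (hA : A.IsPositive) (h : IsAdjointA A T S) :
    IsAdjointA A (reA T S) (reA T S) := by
  have := (h.add (h.symm hA)).smul (2 : ℂ)⁻¹
  rwa [map_inv₀, map_ofNat, add_comm S] at this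

end IsAdjointA

lemma IsAdjointA.reApplyInnerSelf_apply_sq_le (hA : A.IsPositive) (h : IsAdjointA A T S)
    (z : E) :
    A.reApplyInnerSelf (T z) ^ 2 ≤ A.reApplyInnerSelf z * A.reApplyInnerSelf (S (T z)) :=
  calc A.reApplyInnerSelf (T z) ^ 2 = |(⟪A z, S (T z)⟫_ℂ).re| ^ 2 := by
        rw [sq_abs, reApplyInnerSelf_apply, h]; rfl
    _ ≤ ‖⟪A z, S (T z)⟫_ℂ‖ ^ 2 := by gcongr; exact Complex.abs_re_le_norm _
    _ ≤ _ := hA.norm_inner_apply_sq_le _ _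

lemma IsAdjointA.reApplyInnerSelf_apply_pow_two_pow_le (hA : A.IsPositive)
    (hS : IsAdjointA A S S) {z : E} (hz : A.reApplyInnerSelf z = 1) (k : ℕ) :
    A.reApplyInnerSelf (S z) ^ 2 ^ k ≤ A.reApplyInnerSelf ((S ^ 2 ^ k) z) := by
  induction k with
  | zero => simp
  | succ k ih =>
    calc A.reApplyInnerSelf (S z) ^ 2 ^ (k + 1) = (A.reApplyInnerSelf (S z) ^ 2 ^ k) ^ 2 := by
          rw [pow_succ, pow_mul]
      _ ≤ A.reApplyInnerSelf ((S ^ 2 ^ k) z) ^ 2 := by gcongr; exact pow_nonneg (hA.2 _) _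
      _ ≤ A.reApplyInnerSelf ((S ^ 2 ^ (k + 1)) z) := by
          have := (hS.pow (2 ^ k)).reApplyInnerSelf_apply_sq_le hA z
          rwa [hz, one_mul, ← mul_apply_eq_comp, ← pow_add, ← mul_two, ← pow_succ] at this

lemma IsAdjointA.reApplyInnerSelf_apply_le (hA : A.IsPositive) (hS : IsAdjointA A S S) {z : E}
    (hz : A.reApplyInnerSelf z = 1) : A.reApplyInnerSelf (S z) ≤ ‖S‖ ^ 2 := by
  refine le_of_forall_pow_two_pow_le_mul (C := ‖A‖ * ‖z‖ ^ 2) (by positivity) fun k => ?_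
  calc A.reApplyInnerSelf (S z) ^ 2 ^ k ≤ A.reApplyInnerSelf ((S ^ 2 ^ k) z) :=
        hS.reApplyInnerSelf_apply_pow_two_pow_le hA hz k
    _ ≤ ‖A‖ * ‖(S ^ 2 ^ k) z‖ ^ 2 := reApplyInnerSelf_le_norm_mul_sq A _
    _ ≤ ‖A‖ * (‖S‖ ^ 2 ^ k * ‖z‖) ^ 2 := by
        gcongr
        exact (le_opNorm _ _).trans (by gcongr; exact norm_pow_le' _ (by positivity))
    _ = ‖A‖ * ‖z‖ ^ 2 * (‖S‖ ^ 2) ^ 2 ^ k := by ring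

lemma IsAdjointA.norm_inner_apply_sq_le_norm_comp (hA : A.IsPositive) (h : IsAdjointA A T S)
    {x : E} (hx : A.reApplyInnerSelf x = 1) : ‖⟪A (T x), x⟫_ℂ‖ ^ 2 ≤ ‖S ∘L T‖ := by
  have hST : A.reApplyInnerSelf ((S ∘L T) x) ≤ ‖S ∘L T‖ ^ 2 :=
    ((h.symm hA).comp h).reApplyInnerSelf_apply_le hA hx
  have hT : A.reApplyInnerSelf (T x) ^ 2 ≤ ‖S ∘L T‖ ^ 2 := by
    have := h.reApplyInnerSelf_apply_sq_le hA x
    rw [hx, one_mul] at this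
    exact this.trans hST
  calc ‖⟪A (T x), x⟫_ℂ‖ ^ 2 ≤ A.reApplyInnerSelf (T x) * A.reApplyInnerSelf x :=
        hA.norm_inner_apply_sq_le _ _
    _ ≤ ‖S ∘L T‖ := by
        rw [hx, mul_one]
        exact (pow_le_pow_iff_left₀ (hA.2 _) (norm_nonneg _) two_ne_zero).1 hT

lemma wA_nonneg (A T : E →L[ℂ] E) : 0 ≤ wA A T :=
  Real.sSup_nonneg (by rintro _ ⟨x, -, rfl⟩; positivity)

lemma IsAdjointA.norm_inner_apply_le_wA (hA : A.IsPositive) (h : IsAdjointA A T S) {x : E}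
    (hx : A.reApplyInnerSelf x = 1) : ‖⟪A (T x), x⟫_ℂ‖ ≤ wA A T := by
  refine le_csSup ⟨√‖S ∘L T‖, ?_⟩ ⟨x, (sNormA_eq_one_iff x).2 hx, rfl⟩
  rintro _ ⟨y, hy, rfl⟩
  exact Real.le_sqrt_of_sq_le
    (h.norm_inner_apply_sq_le_norm_comp hA ((sNormA_eq_one_iff y).1 hy))

lemma IsAdjointA.norm_inner_apply_le_wA_mul (hA : A.IsPositive) (h : IsAdjointA A T S) (x : E) :
    ‖⟪A (T x), x⟫_ℂ‖ ≤ wA A T * A.reApplyInnerSelf x := by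
  rcases (hA.2 x).eq_or_lt with hx | hx
  · have := hA.norm_inner_apply_sq_le (T x) x
    rw [← hx, mul_zero] at this
    have h0 : ‖⟪A (T x), x⟫_ℂ‖ ^ 2 = 0 := le_antisymm this (sq_nonneg _)
    rw [pow_eq_zero_iff two_ne_zero] at h0
    rw [h0, ← hx, mul_zero]
  · obtain ⟨c, hc⟩ := exists_reApplyInnerSelf_smul_eq_one hx
    have hcx := h.norm_inner_apply_le_wA hA hc
    rw [reApplyInnerSelf_smul] at hc
    rw [map_smul, map_smul, inner_smul_left, inner_smul_right, norm_mul, norm_mul,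
      RCLike.norm_conj, ← mul_assoc, ← sq] at hcx
    calc ‖⟪A (T x), x⟫_ℂ‖ = ‖c‖ ^ 2 * ‖⟪A (T x), x⟫_ℂ‖ * A.reApplyInnerSelf x := by
          rw [mul_right_comm, hc, one_mul]
      _ ≤ wA A T * A.reApplyInnerSelf x := by gcongr

lemma IsAdjointA.four_mul_re_inner_le (hA : A.IsPositive) (hR : IsAdjointA A R R) {w : ℝ}
    (hw : ∀ v, ‖⟪A (R v), v⟫_ℂ‖ ≤ w * A.reApplyInnerSelf v) (z y : E) :
    4 * (⟪A (R z), y⟫_ℂ).re ≤ 2 * w * (A.reApplyInnerSelf z + A.reApplyInnerSelf y) := by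
  have hsymm : (⟪A (R y), z⟫_ℂ).re = (⟪A (R z), y⟫_ℂ).re := by
    rw [hR, ← hA.conj_inner_apply, Complex.conj_re]
  have hpolar : 4 * (⟪A (R z), y⟫_ℂ).re =
      (⟪A (R (z + y)), z + y⟫_ℂ).re - (⟪A (R (z - y)), z - y⟫_ℂ).re := by
    simp only [map_add, map_sub, inner_add_left, inner_add_right, inner_sub_left,
      inner_sub_right, Complex.add_re, Complex.sub_re, hsymm]
    ring
  have h₁ := (Complex.re_le_norm _).trans (hw (z + y))
  have h₂ := ((neg_le_abs _).trans (Complex.abs_re_le_norm _)).trans (hw (z - y))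
  calc 4 * (⟪A (R z), y⟫_ℂ).re
        ≤ w * (A.reApplyInnerSelf (z + y) + A.reApplyInnerSelf (z - y)) := by linarith
    _ = 2 * w * (A.reApplyInnerSelf z + A.reApplyInnerSelf y) := by
        rw [reApplyInnerSelf_add_add_sub]; ring

lemma IsAdjointA.reApplyInnerSelf_apply_le_of_norm_inner_le (hA : A.IsPositive)
    (hR : IsAdjointA A R R) {w : ℝ} (hw0 : 0 ≤ w)
    (hw : ∀ v, ‖⟪A (R v), v⟫_ℂ‖ ≤ w * A.reApplyInnerSelf v) (z : E) :
    A.reApplyInnerSelf (R z) ≤ w ^ 2 * A.reApplyInnerSelf z := by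
  have hq := hA.2 z
  rcases hw0.eq_or_lt with rfl | hw0
  · have : 4 * A.reApplyInnerSelf (R z) ≤
        2 * 0 * (A.reApplyInnerSelf z + A.reApplyInnerSelf (R z)) :=
      hR.four_mul_re_inner_le hA hw z (R z)
    linarith
  · have key : 4 * (w⁻¹ * A.reApplyInnerSelf (R z)) ≤
        2 * w * (A.reApplyInnerSelf z + ‖((w⁻¹ : ℝ) : ℂ)‖ ^ 2 * A.reApplyInnerSelf (R z)) := by
      have := hR.four_mul_re_inner_le hA hw z (((w⁻¹ : ℝ) : ℂ) • R z)
      rwa [inner_smul_right, Complex.re_ofReal_mul, reApplyInnerSelf_smul] at this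
    rw [Complex.norm_real, Real.norm_eq_abs, sq_abs] at key
    field_simp at key
    nlinarith

lemma IsAdjointA.inner_reA_smul_apply (hA : A.IsPositive) (h : IsAdjointA A T S) (e : ℂ)
    (v : E) :
    ⟪A (reA (e • T) (conj e • S) v), v⟫_ℂ = ((conj e * ⟪A (T v), v⟫_ℂ).re : ℂ) := by
  have hS : ⟪A (S v), v⟫_ℂ = conj ⟪A (T v), v⟫_ℂ := by rw [h.symm hA, hA.conj_inner_apply]
  simp only [reA, smul_apply, add_apply, map_smul, map_add, inner_smul_left, inner_add_left, hS]
  rw [Complex.re_eq_add_conj, map_mul, Complex.conj_conj, map_inv₀, map_ofNat]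
  ring

lemma IsAdjointA.reApplyInnerSelf_reA_smul_apply_le (hA : A.IsPositive) (h : IsAdjointA A T S)
    {e : ℂ} (he : ‖e‖ = 1) (z : E) :
    A.reApplyInnerSelf (reA (e • T) (conj e • S) z) ≤ wA A T ^ 2 * A.reApplyInnerSelf z := by
  refine ((h.smul e).selfAdjoint_reA hA).reApplyInnerSelf_apply_le_of_norm_inner_le hA
    (wA_nonneg A T) (fun v => ?_) z
  rw [h.inner_reA_smul_apply hA, Complex.norm_real, Real.norm_eq_abs]
  calc |(conj e * ⟪A (T v), v⟫_ℂ).re| ≤ ‖conj e * ⟪A (T v), v⟫_ℂ‖ := Complex.abs_re_le_norm _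
    _ = ‖⟪A (T v), v⟫_ℂ‖ := by rw [norm_mul, RCLike.norm_conj, he, one_mul]
    _ ≤ wA A T * A.reApplyInnerSelf v := h.norm_inner_apply_le_wA_mul hA v

lemma IsAdjointA.reApplyInnerSelf_reA_smul_sq_apply_le (hA : A.IsPositive)
    (h : IsAdjointA A T S) {e : ℂ} (he : ‖e‖ = 1) (z : E) :
    A.reApplyInnerSelf (reA (e • T) (conj e • S) (reA (e • T) (conj e • S) z)) ≤
      wA A T ^ 4 * A.reApplyInnerSelf z :=
  calc _ ≤ wA A T ^ 2 * A.reApplyInnerSelf (reA (e • T) (conj e • S) z) :=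
        h.reApplyInnerSelf_reA_smul_apply_le hA he _
    _ ≤ wA A T ^ 2 * (wA A T ^ 2 * A.reApplyInnerSelf z) := by
        gcongr; exact h.reApplyInnerSelf_reA_smul_apply_le hA he z
    _ = wA A T ^ 4 * A.reApplyInnerSelf z := by ring

lemma IsAdjointA.re_inner_apply_reA_smul (hA : A.IsPositive) {P : E →L[ℂ] E}
    (hP : IsAdjointA A P P) (h : IsAdjointA A T S) (ζ : ℂ) (u : E) :
    (⟪A (P u), reA (ζ • T) (conj ζ • S) u⟫_ℂ).re =
      2⁻¹ * (ζ * conj ⟪A ((P ∘L T + T ∘L P) u), u⟫_ℂ).re := by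
  have hPT : ⟪A (P u), T u⟫_ℂ = conj ⟪A (P (T u)), u⟫_ℂ := by rw [hP, hA.conj_inner_apply]
  have hTP : ⟪A (P u), S u⟫_ℂ = ⟪A (T (P u)), u⟫_ℂ := (h _ _).symm
  simp only [reA, smul_apply, add_apply, comp_apply, inner_smul_right, inner_add_right, hPT, hTP,
    map_add, inner_add_left]
  simp only [Complex.mul_re, Complex.add_re, Complex.conj_re, Complex.conj_im, Complex.inv_re,
    Complex.inv_im, Complex.add_im, Complex.mul_im]
  norm_num
  ring

lemma reA_smul_comp_reA_smul {e : ℂ} (he : conj e * e = 1) (T₁ T₂ S₁ S₂ : E →L[ℂ] E) :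
    reA (e • T₂) (conj e • S₁) ∘L reA (e • T₁) (conj e • S₂) =
      (4⁻¹ : ℂ) • (S₁ ∘L T₁ + T₂ ∘L S₂) +
        (2⁻¹ : ℂ) • reA ((e * e) • (T₂ ∘L T₁)) (conj (e * e) • (S₁ ∘L S₂)) := by
  ext u
  simp only [reA, comp_apply, add_apply, smul_apply, map_add, map_smul, map_mul]
  match_scalars <;> first | ring1 | linear_combination (4⁻¹ : ℂ) * he

lemma IsAdjointA.reApplyInnerSelf_quarter_add_half (hA : A.IsPositive) {P : E →L[ℂ] E}
    (hP : IsAdjointA A P P) (h : IsAdjointA A T S) (ζ : ℂ) (u : E) :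
    A.reApplyInnerSelf ((4⁻¹ : ℂ) • P u + (2⁻¹ : ℂ) • reA (ζ • T) (conj ζ • S) u) =
      1 / 16 * A.reApplyInnerSelf (P u) +
        1 / 8 * (ζ * conj ⟪A ((P ∘L T + T ∘L P) u), u⟫_ℂ).re +
        1 / 4 * A.reApplyInnerSelf (reA (ζ • T) (conj ζ • S) u) := by
  rw [hA.reApplyInnerSelf_add, reApplyInnerSelf_smul, reApplyInnerSelf_smul, map_smul,
    inner_smul_left, inner_smul_right, ← mul_assoc, map_inv₀, map_ofNat,
    show (4⁻¹ * 2⁻¹ : ℂ) = ((8⁻¹ : ℝ) : ℂ) by norm_num, Complex.re_ofReal_mul,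
    hP.re_inner_apply_reA_smul hA h]
  norm_num
  ring

lemma sq_mA_le (hA : A.IsPositive) (θ : ℝ) {x : E} (hx : sNormA A x = 1) :
    mA A T S ^ 2 ≤
      A.reApplyInnerSelf
        (reA (Complex.exp (θ * Complex.I) • T) (conj (Complex.exp (θ * Complex.I)) • S) x) := by
  rw [← hA.sNormA_sq]
  gcongr
  · exact Real.sInf_nonneg (by rintro _ ⟨_, _, _, rfl⟩; exact Real.sqrt_nonneg _)
  · exact csInf_le ⟨0, by rintro _ ⟨_, _, _, rfl⟩; exact Real.sqrt_nonneg _⟩ ⟨θ, x, hx, rfl⟩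

lemma cA_le_norm_inner (x : E) (hx : sNormA A x = 1) : cA A T ≤ ‖⟪A (T x), x⟫_ℂ‖ :=
  csInf_le ⟨0, by rintro _ ⟨_, _, rfl⟩; positivity⟩ ⟨x, hx, rfl⟩

lemma sq_opNormA_le {D : ℝ} (hD : 0 ≤ D)
    (h : ∀ x, sNormA A x = 1 → A.reApplyInnerSelf (T x) ≤ D) : opNormA A T ^ 2 ≤ D := by
  have hle : opNormA A T ≤ √D :=
    Real.sSup_le (by rintro _ ⟨x, -, hx, rfl⟩; exact Real.sqrt_le_sqrt (h x hx))
      (Real.sqrt_nonneg _)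
  have h0 : 0 ≤ opNormA A T :=
    Real.sSup_nonneg (by rintro _ ⟨x, -, -, rfl⟩; exact Real.sqrt_nonneg _)
  calc opNormA A T ^ 2 ≤ √D ^ 2 := by gcongr
    _ = D := Real.sq_sqrt hD

lemma mul_sq_opNormA_add_le (hA : A.IsPositive) {c K W : ℝ} (hc : 0 < c) {u : E}
    (hu : sNormA A u = 1) (h : ∀ x, sNormA A x = 1 → c * A.reApplyInnerSelf (T x) + K ≤ W) :
    c * opNormA A T ^ 2 + K ≤ W := by
  have hKW : 0 ≤ (W - K) / c :=
    div_nonneg (by linarith [h u hu, mul_nonneg hc.le (hA.2 (T u))]) hc.le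
  have := sq_opNormA_le hKW fun x hx => (le_div_iff₀' hc).2 (by linarith [h x hx])
  rw [le_div_iff₀' hc] at this
  linarith

end SemiInner

section Blk2

variable {H : Type*} [NormedAddCommGroup H] [InnerProductSpace ℂ H]

@[simp]
lemma blk2_apply (X Y Z W : H →L[ℂ] H) (v : WithLp 2 (H × H)) :
    blk2 X Y Z W v = WithLp.toLp 2 (X v.fst + Y v.snd, Z v.fst + W v.snd) := rfl

lemma inner_blk2_diag_apply (A : H →L[ℂ] H) (v w : WithLp 2 (H × H)) :
    ⟪blk2 A 0 0 A v, w⟫_ℂ = ⟪A v.fst, w.fst⟫_ℂ + ⟪A v.snd, w.snd⟫_ℂ := by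
  simp

lemma reApplyInnerSelf_blk2_diag (A : H →L[ℂ] H) (v : WithLp 2 (H × H)) :
    (blk2 A 0 0 A).reApplyInnerSelf v = A.reApplyInnerSelf v.fst + A.reApplyInnerSelf v.snd := by
  simp [reApplyInnerSelf_apply]

variable {A : H →L[ℂ] H}

lemma ContinuousLinearMap.IsPositive.blk2_diag (hA : A.IsPositive) :
    (blk2 A 0 0 A).IsPositive := by
  refine ⟨fun v w => ?_, fun v => ?_⟩
  · simp only [ContinuousLinearMap.coe_coe, blk2_apply, WithLp.prod_inner_apply]
    simp [hA.inner_left_eq_inner_right]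
  · rw [reApplyInnerSelf_blk2_diag]
    exact add_nonneg (hA.2 _) (hA.2 _)

lemma IsAdjointA.blk2 {T₁ T₂ S₁ S₂ : H →L[ℂ] H} (h₁ : IsAdjointA A T₁ S₁)
    (h₂ : IsAdjointA A T₂ S₂) :
    IsAdjointA (blk2 A 0 0 A) (blk2 0 T₁ T₂ 0) (blk2 0 S₂ S₁ 0) := by
  intro v w
  simp only [inner_blk2_diag_apply]
  simp [h₁ v.snd, h₂ v.fst, add_comm]

lemma reA_smul_blk2 (e : ℂ) (T₁ T₂ S₁ S₂ : H →L[ℂ] H) :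
    reA (e • blk2 0 T₁ T₂ 0) (conj e • blk2 0 S₂ S₁ 0) =
      blk2 0 (reA (e • T₁) (conj e • S₂)) (reA (e • T₂) (conj e • S₁)) 0 := by
  ext v : 1
  rw [WithLp.ext_iff]
  simp [reA]

end Blk2

section Main

variable {H : Type*} [NormedAddCommGroup H] [InnerProductSpace ℂ H] [CompleteSpace H]
  {A T₁ T₂ T₁s T₂s Ss : H →L[ℂ] H}

lemma IsSharpA.comp_comp_eq (h₁ : IsSharpA A T₁ T₁s) (h₂ : IsSharpA A T₂ T₂s)
    (hS : IsSharpA A (T₂ ∘L T₁) Ss) : A ∘L (T₁s ∘L T₂s) = A ∘L Ss := by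
  rw [hS.1, ← comp_assoc, h₁.1, comp_assoc, h₂.1, adjoint_comp, comp_assoc]

lemma reApplyInnerSelf_reA_blk2_sq_apply (hA : A.IsPositive) (h₁ : IsSharpA A T₁ T₁s)
    (h₂ : IsSharpA A T₂ T₂s) (hS : IsSharpA A (T₂ ∘L T₁) Ss) {e : ℂ} (he : conj e * e = 1)
    (u : H) :
    (blk2 A 0 0 A).reApplyInnerSelf
        (reA (e • blk2 0 T₁ T₂ 0) (conj e • blk2 0 T₂s T₁s 0)
          (reA (e • blk2 0 T₁ T₂ 0) (conj e • blk2 0 T₂s T₁s 0) (WithLp.toLp 2 (0, u)))) =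
      A.reApplyInnerSelf ((4⁻¹ : ℂ) • (T₁s ∘L T₁ + T₂ ∘L T₂s) u +
        (2⁻¹ : ℂ) • reA ((e * e) • (T₂ ∘L T₁)) (conj (e * e) • Ss) u) := by
  have hA' : A (T₁s (T₂s u)) = A (Ss u) := congr($(h₁.comp_comp_eq h₂ hS) u)
  rw [reA_smul_blk2, reApplyInnerSelf_blk2_diag]
  simp only [blk2_apply, WithLp.toLp_fst, WithLp.toLp_snd, zero_apply, map_zero, zero_add,
    add_zero]
  rw [show A.reApplyInnerSelf 0 = 0 by simp [reApplyInnerSelf_apply], zero_add, ← comp_apply,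
    reA_smul_comp_reA_smul he]
  apply hA.reApplyInnerSelf_eq_of_apply_eq
  simp only [reA, add_apply, smul_apply, comp_apply, map_add, map_smul, hA']

lemma le_wA_blk2_pow_four (hA : A.IsPositive) (h₁ : IsSharpA A T₁ T₁s) (h₂ : IsSharpA A T₂ T₂s)
    (hS : IsSharpA A (T₂ ∘L T₁) Ss) {u : H} (hu : sNormA A u = 1) :
    1 / 16 * A.reApplyInnerSelf ((T₁s ∘L T₁ + T₂ ∘L T₂s) u) +
        1 / 8 * cA A ((T₁s ∘L T₁ + T₂ ∘L T₂s) ∘L (T₂ ∘L T₁) +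
          (T₂ ∘L T₁) ∘L (T₁s ∘L T₁ + T₂ ∘L T₂s)) +
        1 / 4 * mA A (T₂ ∘L T₁) Ss ^ 2 ≤
      wA (blk2 A 0 0 A) (blk2 0 T₁ T₂ 0) ^ 4 := by
  set P := T₁s ∘L T₁ + T₂ ∘L T₂s
  set c := ⟪A ((P ∘L (T₂ ∘L T₁) + (T₂ ∘L T₁) ∘L P) u), u⟫_ℂ
  -- `e ^ 2` rotates the cross term `c` onto the positive real axis
  set e := Complex.exp ((c.arg / 2 : ℝ) * Complex.I)
  have he : ‖e‖ = 1 := Complex.norm_exp_ofReal_mul_I _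
  have hce : conj e * e = 1 := by
    rw [mul_comm, Complex.mul_conj, Complex.normSq_eq_norm_sq, he, one_pow, Complex.ofReal_one]
  have hee : e * e = Complex.exp (c.arg * Complex.I) := by
    rw [← Complex.exp_add]; push_cast; ring_nf
  have a₁ := IsAdjointA.of_isSharpA hA h₁
  have a₂ := IsAdjointA.of_isSharpA hA h₂
  have aP : IsAdjointA A P P := ((a₁.symm hA).comp a₁).add (a₂.comp (a₂.symm hA))
  have hx : (blk2 A 0 0 A).reApplyInnerSelf (WithLp.toLp 2 (0, u)) = 1 := by
    simp [← (sNormA_eq_one_iff u).1 hu, reApplyInnerSelf_apply]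
  have hw := (a₁.blk2 a₂).reApplyInnerSelf_reA_smul_sq_apply_le hA.blk2_diag he
    (WithLp.toLp 2 (0, u))
  rw [hx, mul_one, reApplyInnerSelf_reA_blk2_sq_apply hA h₁ h₂ hS hce,
    aP.reApplyInnerSelf_quarter_add_half hA (IsAdjointA.of_isSharpA hA hS), hee,
    exp_arg_mul_I_mul_conj, Complex.ofReal_re] at hw
  have hc := cA_le_norm_inner (T := P ∘L (T₂ ∘L T₁) + (T₂ ∘L T₁) ∘L P) u hu
  have hm := sq_mA_le (T := T₂ ∘L T₁) (S := Ss) hA c.arg hu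
  linarith

end Main

theorem stmt14_general {H : Type*} [NormedAddCommGroup H] [InnerProductSpace ℂ H] [CompleteSpace H]
    (A : H →L[ℂ] H) (hA : A.IsPositive)
    (T₁ T₂ T₁s T₂s Ss : H →L[ℂ] H)
    (hT₁s : IsSharpA A T₁ T₁s) (hT₂s : IsSharpA A T₂ T₂s)
    (hSs : IsSharpA A (T₂ ∘L T₁) Ss) :
    (1 / 16) * opNormA A (T₁s ∘L T₁ + T₂ ∘L T₂s) ^ 2 +
        (1 / 8) * cA A ((T₁s ∘L T₁ + T₂ ∘L T₂s) ∘L (T₂ ∘L T₁) +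
          (T₂ ∘L T₁) ∘L (T₁s ∘L T₁ + T₂ ∘L T₂s)) +
        (1 / 4) * (sInf {r | ∃ θ : ℝ, ∃ x : H, sNormA A x = 1 ∧
          r = sNormA A (((2 : ℂ)⁻¹ • (Complex.exp ((θ : ℂ) * Complex.I) • (T₂ ∘L T₁) +
            (starRingEnd ℂ) (Complex.exp ((θ : ℂ) * Complex.I)) • Ss)) x)}) ^ 2 ≤
      wA (blk2 A 0 0 A) (blk2 0 T₁ T₂ 0) ^ 4 := by
  change _ + _ + 1 / 4 * mA A (T₂ ∘L T₁) Ss ^ 2 ≤ _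
  by_cases hunit : ∃ u : H, sNormA A u = 1
  · obtain ⟨u, hu⟩ := hunit
    exact (add_assoc _ _ _).trans_le <| mul_sq_opNormA_add_le hA (by norm_num) hu fun x hx =>
      (add_assoc _ _ _).symm.trans_le (le_wA_blk2_pow_four hA hT₁s hT₂s hSs hx)
  · rw [not_exists] at hunit
    simp [opNormA, cA, mA, hunit]
    positivity

theorem stmt14 {H : Type*} [NormedAddCommGroup H] [InnerProductSpace ℂ H] [CompleteSpace H]
    (A : H →L[ℂ] H) (hA : A.IsPositive)
    (T₁ T₂ T₁s T₂s Ss : H →L[ℂ] H) (hT₁ : memBA A T₁) (hT₂ : memBA A T₂)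
    (hT₁s : IsSharpA A T₁ T₁s) (hT₂s : IsSharpA A T₂ T₂s)
    (hSs : IsSharpA A (T₂ ∘L T₁) Ss) :
    (1 / 16) * opNormA A (T₁s ∘L T₁ + T₂ ∘L T₂s) ^ 2 +
        (1 / 8) * cA A ((T₁s ∘L T₁ + T₂ ∘L T₂s) ∘L (T₂ ∘L T₁) +
          (T₂ ∘L T₁) ∘L (T₁s ∘L T₁ + T₂ ∘L T₂s)) +
        (1 / 4) * (sInf {r | ∃ θ : ℝ, ∃ x : H, sNormA A x = 1 ∧
          r = sNormA A (((2 : ℂ)⁻¹ • (Complex.exp ((θ : ℂ) * Complex.I) • (T₂ ∘L T₁) +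
            (starRingEnd ℂ) (Complex.exp ((θ : ℂ) * Complex.I)) • Ss)) x)}) ^ 2 ≤
      wA (blk2 A 0 0 A) (blk2 0 T₁ T₂ 0) ^ 4 :=
  stmt14_general A hA T₁ T₂ T₁s T₂s Ss hT₁s hT₂s hSs
end
end

section
/- For all T₁, T₂ ∈ B_A(H), one has ‖T₁^{#_A} T₂‖_A = ‖T₂^{#_A} T₁‖_A. -/
/-!
If `R(S) ⊆ closure R(A)`, the `A`-seminorm of `S` is the double supremum of `|⟪S x, y⟫_A|` over
`A`-unit vectors `x, y ∈ closure R(A)`: the supremum over `y` recovers `‖S x‖_A` by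
Cauchy–Schwarz for the positive semidefinite form `⟪·, ·⟫_A`, attained at `y = S x / ‖S x‖_A`.
Since `⟪T₁^♯ T₂ x, y⟫_A = ⟪T₂ x, T₁ y⟫_A = conj ⟪T₂^♯ T₁ y, x⟫_A`, the double suprema for
`T₁^♯ T₂` and `T₂^♯ T₁` range over the same set of values, with the roles of `x` and `y` swapped.
-/

noncomputable section

open ContinuousLinearMap

section SemiInner

variable {E : Type*} [NormedAddCommGroup E] [InnerProductSpace ℂ E] {A : E →L[ℂ] E}

theorem sNormA_nonneg (A : E →L[ℂ] E) (x : E) : 0 ≤ sNormA A x := Real.sqrt_nonneg _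

theorem sNormA_smul (A : E →L[ℂ] E) (c : ℂ) (x : E) :
    sNormA A (c • x) = ‖c‖ * sNormA A x := by
  rw [sNormA, sNormA, sInnerA, sInnerA, map_smul, inner_smul_left, inner_smul_right,
    ← mul_assoc, ← Complex.normSq_eq_conj_mul_self, Complex.re_ofReal_mul,
    Real.sqrt_mul (Complex.normSq_nonneg c), ← Complex.norm_def]

theorem conj_sInnerA (hA : (A : E →ₗ[ℂ] E).IsSymmetric) (x y : E) :
    starRingEnd ℂ (sInnerA A x y) = sInnerA A y x := by
  rw [sInnerA, sInnerA, inner_conj_symm]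
  exact (hA y x).symm

theorem norm_sInnerA_comm (hA : (A : E →ₗ[ℂ] E).IsSymmetric) (x y : E) :
    ‖sInnerA A x y‖ = ‖sInnerA A y x‖ := by
  rw [← conj_sInnerA hA, Complex.norm_conj]

theorem sq_sNormA (hA : A.IsPositive) (x : E) : sNormA A x ^ 2 = (sInnerA A x x).re :=
  Real.sq_sqrt (hA.re_inner_nonneg_left x)

abbrev ContinuousLinearMap.IsPositive.sInnerACore (hA : A.IsPositive) :
    PreInnerProductSpace.Core ℂ E where
  inner := sInnerA A
  conj_inner_symm x y := conj_sInnerA hA.isSymmetric y x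
  re_inner_nonneg := hA.re_inner_nonneg_left
  add_left x y z := by simp only [sInnerA, map_add, inner_add_left]
  smul_left x y r := by simp only [sInnerA, map_smul, inner_smul_left]

theorem norm_sInnerA_le (hA : A.IsPositive) (x y : E) :
    ‖sInnerA A x y‖ ≤ sNormA A x * sNormA A y :=
  letI := hA.sInnerACore
  InnerProductSpace.Core.norm_inner_le_norm (𝕜 := ℂ) x y

theorem smul_mem_closure_range (A : E →L[ℂ] E) (c : ℂ) {x : E}
    (hx : x ∈ closure (Set.range A)) : c • x ∈ closure (Set.range A) := by
  have : closure (Set.range A) = (LinearMap.range (A : E →ₗ[ℂ] E)).topologicalClosure := by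
    rw [Submodule.topologicalClosure_coe, LinearMap.coe_range, coe_coe]
  rw [this] at hx ⊢
  exact Submodule.smul_mem _ c hx

theorem exists_sNormA_le_norm_sInnerA (hA : A.IsPositive) {v : E}
    (hv : v ∈ closure (Set.range A)) (hv0 : sNormA A v ≠ 0) :
    ∃ y ∈ closure (Set.range A), sNormA A y = 1 ∧ sNormA A v ≤ ‖sInnerA A v y‖ := by
  set n := sNormA A v
  have hn : 0 < n := (sNormA_nonneg A v).lt_of_ne' hv0
  refine ⟨(n : ℂ)⁻¹ • v, smul_mem_closure_range A _ hv, ?_, ?_⟩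
  · rw [sNormA_smul, norm_inv, Complex.norm_real, Real.norm_of_nonneg hn.le, inv_mul_cancel₀ hv0]
  · rw [sInnerA, inner_smul_right, norm_mul, norm_inv, Complex.norm_real,
      Real.norm_of_nonneg hn.le, le_inv_mul_iff₀ hn, ← sq, sq_sNormA hA]
    exact Complex.re_le_norm _

theorem opNormA_eq_sSup_norm_sInnerA (hA : A.IsPositive) {S : E →L[ℂ] E}
    (hS : Set.range S ⊆ closure (Set.range A)) :
    opNormA A S = sSup {r | ∃ x ∈ closure (Set.range A), ∃ y ∈ closure (Set.range A),
      sNormA A x = 1 ∧ sNormA A y = 1 ∧ r = ‖sInnerA A (S x) y‖} := by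
  refine csSup_eq_csSup_of_forall_exists_le ?_ ?_
  · rintro _ ⟨x, hx, hx1, rfl⟩
    by_cases h : sNormA A (S x) = 0
    · exact ⟨_, ⟨x, hx, x, hx, hx1, hx1, rfl⟩, h ▸ norm_nonneg _⟩
    · obtain ⟨y, hy, hy1, hle⟩ := exists_sNormA_le_norm_sInnerA hA (hS ⟨x, rfl⟩) h
      exact ⟨_, ⟨x, hx, y, hy, hx1, hy1, rfl⟩, hle⟩
  · rintro _ ⟨x, hx, y, hy, hx1, hy1, rfl⟩
    refine ⟨_, ⟨x, hx, hx1, rfl⟩, ?_⟩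
    simpa only [hy1, mul_one] using norm_sInnerA_le hA (S x) y

variable [CompleteSpace E]

theorem IsSharpA.sInnerA_apply_left {T S : E →L[ℂ] E} (h : IsSharpA A T S) (x y : E) :
    sInnerA A (S x) y = sInnerA A x (T y) := by
  rw [sInnerA, sInnerA, ← comp_apply A S, h.1, comp_apply, adjoint_inner_left]

end SemiInner

theorem stmt19_general {H : Type*} [NormedAddCommGroup H] [InnerProductSpace ℂ H] [CompleteSpace H]
    (A : H →L[ℂ] H) (hA : A.IsPositive)
    (T₁ T₂ T₁s T₂s : H →L[ℂ] H)
    (hT₁s : IsSharpA A T₁ T₁s) (hT₂s : IsSharpA A T₂ T₂s) :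
    opNormA A (T₁s ∘L T₂) = opNormA A (T₂s ∘L T₁) := by
  have swap (x y : H) :
      ‖sInnerA A ((T₁s ∘L T₂) x) y‖ = ‖sInnerA A ((T₂s ∘L T₁) y) x‖ := by
    rw [comp_apply, comp_apply, hT₁s.sInnerA_apply_left, hT₂s.sInnerA_apply_left,
      norm_sInnerA_comm hA.isSymmetric]
  rw [opNormA_eq_sSup_norm_sInnerA hA (S := T₁s ∘L T₂)
      ((Set.range_comp_subset_range T₂ T₁s).trans hT₁s.2),
    opNormA_eq_sSup_norm_sInnerA hA (S := T₂s ∘L T₁)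
      ((Set.range_comp_subset_range T₁ T₂s).trans hT₂s.2)]
  congr 1
  ext r
  constructor
  · rintro ⟨x, hx, y, hy, hx1, hy1, rfl⟩
    exact ⟨y, hy, x, hx, hy1, hx1, swap x y⟩
  · rintro ⟨y, hy, x, hx, hy1, hx1, rfl⟩
    exact ⟨x, hx, y, hy, hx1, hy1, (swap x y).symm⟩

theorem stmt19 {H : Type*} [NormedAddCommGroup H] [InnerProductSpace ℂ H] [CompleteSpace H]
    (A : H →L[ℂ] H) (hA : A.IsPositive)
    (T₁ T₂ T₁s T₂s : H →L[ℂ] H) (hT₁ : memBA A T₁) (hT₂ : memBA A T₂)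
    (hT₁s : IsSharpA A T₁ T₁s) (hT₂s : IsSharpA A T₂ T₂s) :
    opNormA A (T₁s ∘L T₂) = opNormA A (T₂s ∘L T₁) :=
  stmt19_general A hA T₁ T₂ T₁s T₂s hT₁s hT₂s
end
end
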